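/- arXiv:1410.4947 — 13 statements merged into one kernel-verified Lean document; each statement's English description precedes it below -/
import Mathlib

section
/- A fuzzy subset f of a po-Γ-groupoid M is a fuzzy right ideal of M if and only if (1) f∘1 ⪯ f and (2) x ≤ y implies f(x) ≥ f(y). -/
open Classical
noncomputable section

variable {M : Type*}

/-- Multiplication of fuzzy subsets: (f∘g)(a) = sup over A_a of min; sSup ∅ = 0 in ℝ. -/
def fComp [LE M] (Γ : Set (M → M → M)) (f g : M → ℝ) : M → ℝ :=
  fun a => sSup {r : ℝ | ∃ y z, (∃ γ ∈ Γ, a ≤ γ y z) ∧ r = min (f y) (g z)}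

/-- The constant fuzzy subset 1. -/
def fOne : M → ℝ := fun _ => 1

def IsFuzzy (f : M → ℝ) : Prop := ∀ x, 0 ≤ f x ∧ f x ≤ 1

/-- Compatibility of the order with all operations of Γ. -/
def Compatible [LE M] (Γ : Set (M → M → M)) : Prop :=
  ∀ γ ∈ Γ, ∀ x y z : M, x ≤ y → γ x z ≤ γ y z ∧ γ z x ≤ γ z y

/-- (xγy)μz = xγ(yμz) -/
def GAssoc (Γ : Set (M → M → M)) : Prop :=
  ∀ γ ∈ Γ, ∀ μ ∈ Γ, ∀ x y z : M, μ (γ x y) z = γ x (μ y z)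

def FuzzyRightIdeal [LE M] (Γ : Set (M → M → M)) (f : M → ℝ) : Prop :=
  IsFuzzy f ∧ (∀ x y : M, ∀ γ ∈ Γ, f x ≤ f (γ x y)) ∧ ∀ x y : M, x ≤ y → f y ≤ f x

def FuzzyLeftIdeal [LE M] (Γ : Set (M → M → M)) (f : M → ℝ) : Prop :=
  IsFuzzy f ∧ (∀ x y : M, ∀ γ ∈ Γ, f y ≤ f (γ x y)) ∧ ∀ x y : M, x ≤ y → f y ≤ f x

def GRegular [LE M] (Γ : Set (M → M → M)) : Prop :=
  ∀ a : M, ∃ x : M, ∃ γ ∈ Γ, ∃ μ ∈ Γ, a ≤ μ (γ a x) a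

def GIntraRegular [LE M] (Γ : Set (M → M → M)) : Prop :=
  ∀ a : M, ∃ x y : M, ∃ γ ∈ Γ, ∃ μ ∈ Γ, ∃ ρ ∈ Γ, a ≤ γ x (μ a (ρ a y))

theorem stmt0 [PartialOrder M] (Γ : Set (M → M → M)) (hco : Compatible Γ)
    (f : M → ℝ) (hf : IsFuzzy f) :
    FuzzyRightIdeal Γ f ↔
      ((∀ a : M, fComp Γ f fOne a ≤ f a) ∧ ∀ x y : M, x ≤ y → f y ≤ f x) := by
  constructor
  · rintro ⟨_, hmul, hord⟩
    refine ⟨fun a => ?_, hord⟩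
    apply Real.sSup_le
    · rintro r ⟨y, z, ⟨γ, hγ, hle⟩, rfl⟩
      calc min (f y) (fOne z) ≤ f y := min_le_left _ _
        _ ≤ f (γ y z) := hmul y z γ hγ
        _ ≤ f a := hord a (γ y z) hle
    · exact (hf a).1
  · rintro ⟨hcomp, hord⟩
    refine ⟨hf, fun x y γ hγ => ?_, hord⟩
    have hmem : f x ∈ {r : ℝ | ∃ u v, (∃ δ ∈ Γ, γ x y ≤ δ u v) ∧ r = min (f u) (fOne v)} :=
      ⟨x, y, ⟨γ, hγ, le_refl _⟩, by simp [fOne, min_eq_left (hf x).2]⟩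
    have hbdd : BddAbove {r : ℝ | ∃ u v, (∃ δ ∈ Γ, γ x y ≤ δ u v) ∧ r = min (f u) (fOne v)} := by
      refine ⟨1, ?_⟩
      rintro r ⟨u, v, _, rfl⟩
      exact le_trans (min_le_left _ _) (hf u).2
    exact le_trans (le_csSup hbdd hmem) (hcomp (γ x y))
end
end

section
/- If M is a regular po-Γ-semigroup, then for every fuzzy right ideal f and every fuzzy subset g of M, f∧g ⪯ f∘g. -/
open Classical
noncomputable section

variable {M : Type*}

theorem stmt2 [PartialOrder M] (Γ : Set (M → M → M)) (hco : Compatible Γ)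
    (hassoc : GAssoc Γ) (hreg : GRegular Γ)
    (f g : M → ℝ) (hf : FuzzyRightIdeal Γ f) (hg : IsFuzzy g) :
    ∀ a : M, min (f a) (g a) ≤ fComp Γ f g a := by
  intro a
  obtain ⟨x, γ, hγ, μ, hμ, hle⟩ := hreg a
  have hbdd : BddAbove {r : ℝ | ∃ y z, (∃ γ ∈ Γ, a ≤ γ y z) ∧ r = min (f y) (g z)} := by
    refine ⟨1, ?_⟩
    rintro r ⟨y, z, -, rfl⟩
    exact le_trans (min_le_left _ _) (hf.1 y).2
  have hmem : min (f (γ a x)) (g a) ∈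
      {r : ℝ | ∃ y z, (∃ γ ∈ Γ, a ≤ γ y z) ∧ r = min (f y) (g z)} :=
    ⟨γ a x, a, ⟨μ, hμ, hle⟩, rfl⟩
  calc min (f a) (g a) ≤ min (f (γ a x)) (g a) :=
        min_le_min (hf.2.1 a x γ hγ) le_rfl
    _ ≤ _ := le_csSup hbdd hmem
end
end

section
/- If M is a regular po-Γ-semigroup, then for every fuzzy subset f and every fuzzy left ideal g of M, f∧g ⪯ f∘g. -/
open Classical
noncomputable section

variable {M : Type*}

theorem stmt3 [PartialOrder M] (Γ : Set (M → M → M)) (hco : Compatible Γ)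
    (hassoc : GAssoc Γ) (hreg : GRegular Γ)
    (f g : M → ℝ) (hf : IsFuzzy f) (hg : FuzzyLeftIdeal Γ g) :
    ∀ a : M, min (f a) (g a) ≤ fComp Γ f g a := by
  intro a
  obtain ⟨x, γ, hγ, μ, hμ, ha⟩ := hreg a
  rw [hassoc γ hγ μ hμ] at ha
  obtain ⟨hgf, hgl, hgo⟩ := hg
  have hr : min (f a) (g (μ x a)) ∈
      {r : ℝ | ∃ y z, (∃ γ ∈ Γ, a ≤ γ y z) ∧ r = min (f y) (g z)} :=
    ⟨a, μ x a, ⟨γ, hγ, ha⟩, rfl⟩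
  have hbdd : BddAbove {r : ℝ | ∃ y z, (∃ γ ∈ Γ, a ≤ γ y z) ∧ r = min (f y) (g z)} := by
    refine ⟨1, ?_⟩
    rintro r ⟨y, z, -, rfl⟩
    exact min_le_of_left_le (hf y).2
  calc min (f a) (g a) ≤ min (f a) (g (μ x a)) :=
        min_le_min le_rfl (hgl x a μ hμ)
    _ ≤ fComp Γ f g a := le_csSup hbdd hr
end
end

section
/- If M is a po-Γ-groupoid, f a fuzzy right ideal and g a fuzzy left ideal of M, then f∘g ⪯ f∧g. -/
open Classical
noncomputable section

variable {M : Type*}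

theorem stmt4 [PartialOrder M] (Γ : Set (M → M → M)) (hco : Compatible Γ)
    (f g : M → ℝ) (hf : FuzzyRightIdeal Γ f) (hg : FuzzyLeftIdeal Γ g) :
    ∀ a : M, fComp Γ f g a ≤ min (f a) (g a) := by
  intro a
  apply Real.sSup_le
  · rintro r ⟨y, z, ⟨γ, hγ, hle⟩, rfl⟩
    have h1 : f (γ y z) ≤ f a := hf.2.2 _ _ hle
    have h2 : g (γ y z) ≤ g a := hg.2.2 _ _ hle
    exact le_min (le_trans (min_le_left _ _) ((hf.2.1 y z γ hγ).trans h1))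
      (le_trans (min_le_right _ _) ((hg.2.1 y z γ hγ).trans h2))
  · exact le_min (hf.1 a).1 (hg.1 a).1
end
end

section
/- A po-Γ-semigroup M is regular if and only if for every fuzzy right ideal f and every fuzzy left ideal g of M, f∧g = f∘g. -/
open Classical
noncomputable section

variable {M : Type*}

theorem stmt6 [PartialOrder M] (Γ : Set (M → M → M)) (hco : Compatible Γ)
    (hassoc : GAssoc Γ) :
    GRegular Γ ↔
      ∀ f g : M → ℝ, FuzzyRightIdeal Γ f → FuzzyLeftIdeal Γ g →
        ∀ a : M, min (f a) (g a) = fComp Γ f g a := by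
  constructor
  · rintro hreg f g ⟨hf1, hf2, hf3⟩ ⟨hg1, hg2, hg3⟩ a
    obtain ⟨x, γ, hγ, μ, hμ, hax⟩ := hreg a
    apply le_antisymm
    · have hbdd : BddAbove {r : ℝ | ∃ y z, (∃ γ ∈ Γ, a ≤ γ y z) ∧ r = min (f y) (g z)} := by
        refine ⟨1, ?_⟩
        rintro r ⟨y, z, _, rfl⟩
        exact le_trans (min_le_left _ _) (hf1 y).2
      have hmem : min (f (γ a x)) (g a) ∈
          {r : ℝ | ∃ y z, (∃ γ ∈ Γ, a ≤ γ y z) ∧ r = min (f y) (g z)} :=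
        ⟨γ a x, a, ⟨μ, hμ, hax⟩, rfl⟩
      calc min (f a) (g a) ≤ min (f (γ a x)) (g a) := min_le_min (hf2 a x γ hγ) le_rfl
        _ ≤ _ := le_csSup hbdd hmem
    · apply Real.sSup_le
      · rintro r ⟨y, z, ⟨ν, hν, hle⟩, rfl⟩
        have hy : f y ≤ f a := le_trans (hf2 y z ν hν) (hf3 a (ν y z) hle)
        have hz : g z ≤ g a := le_trans (hg2 y z ν hν) (hg3 a (ν y z) hle)
        exact min_le_min hy hz
      · exact le_min (hf1 a).1 (hg1 a).1
  · intro h a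
    set R : Set M := {t | t ≤ a ∨ ∃ γ ∈ Γ, ∃ x, t ≤ γ a x} with hR
    set L : Set M := {t | t ≤ a ∨ ∃ μ ∈ Γ, ∃ x, t ≤ μ x a} with hL
    set f : M → ℝ := fun t => if t ∈ R then 1 else 0 with hf
    set g : M → ℝ := fun t => if t ∈ L then 1 else 0 with hg
    have hRclosed : ∀ t ∈ R, ∀ γ ∈ Γ, ∀ y, γ t y ∈ R := by
      rintro t (ht | ⟨γ', hγ', x, ht⟩) γ hγ y
      · exact Or.inr ⟨γ, hγ, y, (hco γ hγ t a y ht).1⟩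
      · refine Or.inr ⟨γ', hγ', γ x y, ?_⟩
        calc γ t y ≤ γ (γ' a x) y := (hco γ hγ t (γ' a x) y ht).1
          _ = γ' a (γ x y) := hassoc γ' hγ' γ hγ a x y
    have hLclosed : ∀ t ∈ L, ∀ γ ∈ Γ, ∀ y, γ y t ∈ L := by
      rintro t (ht | ⟨μ', hμ', x, ht⟩) γ hγ y
      · exact Or.inr ⟨γ, hγ, y, (hco γ hγ t a y ht).2⟩
      · refine Or.inr ⟨μ', hμ', γ y x, ?_⟩
        calc γ y t ≤ γ y (μ' x a) := (hco γ hγ t (μ' x a) y ht).2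
          _ = μ' (γ y x) a := (hassoc γ hγ μ' hμ' y x a).symm
    have hfr : FuzzyRightIdeal Γ f := by
      refine ⟨fun t => ?_, fun t y γ hγ => ?_, fun t s hts => ?_⟩
      · simp only [hf]; split <;> norm_num
      · simp only [hf]
        by_cases ht : t ∈ R
        · rw [if_pos ht, if_pos (hRclosed t ht γ hγ y)]
        · rw [if_neg ht]; split <;> norm_num
      · simp only [hf]
        by_cases hs : s ∈ R
        · have : t ∈ R := by
            rcases hs with hsa | ⟨γ', hγ', x, hsx⟩
            · exact Or.inl (le_trans hts hsa)
            · exact Or.inr ⟨γ', hγ', x, le_trans hts hsx⟩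
          rw [if_pos hs, if_pos this]
        · rw [if_neg hs]; split <;> norm_num
    have hgl : FuzzyLeftIdeal Γ g := by
      refine ⟨fun t => ?_, fun y t γ hγ => ?_, fun t s hts => ?_⟩
      · simp only [hg]; split <;> norm_num
      · simp only [hg]
        by_cases ht : t ∈ L
        · rw [if_pos ht, if_pos (hLclosed t ht γ hγ y)]
        · rw [if_neg ht]; split <;> norm_num
      · simp only [hg]
        by_cases hs : s ∈ L
        · have : t ∈ L := by
            rcases hs with hsa | ⟨μ', hμ', x, hsx⟩
            · exact Or.inl (le_trans hts hsa)
            · exact Or.inr ⟨μ', hμ', x, le_trans hts hsx⟩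
          rw [if_pos hs, if_pos this]
        · rw [if_neg hs]; split <;> norm_num
    have heq := h f g hfr hgl a
    have haR : a ∈ R := Or.inl le_rfl
    have haL : a ∈ L := Or.inl le_rfl
    have h1 : min (f a) (g a) = 1 := by
      simp only [hf, hg, if_pos haR, if_pos haL, min_self]
    rw [h1] at heq
    -- extract an element of the sup set with value > 1/2
    have hex : ∃ r ∈ {r : ℝ | ∃ y z, (∃ γ ∈ Γ, a ≤ γ y z) ∧ r = min (f y) (g z)},
        (1:ℝ)/2 < r := by
      by_contra hcon
      push_neg at hcon
      have : fComp Γ f g a ≤ 1/2 := Real.sSup_le (fun r hr => hcon r hr) (by norm_num)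
      rw [← heq] at this; norm_num at this
    obtain ⟨r, ⟨y, z, ⟨ν, hν, hle⟩, rfl⟩, hr⟩ := hex
    have hyR : y ∈ R := by
      by_contra hy
      simp only [hf, if_neg hy] at hr
      have := min_le_left (0:ℝ) (g z); linarith [le_trans hr.le (min_le_left (0:ℝ) (g z))]
    have hzL : z ∈ L := by
      by_contra hz
      simp only [hg, if_neg hz] at hr
      linarith [le_trans hr.le (min_le_right (f y) (0:ℝ))]
    rcases hyR with hya | ⟨γ', hγ', x, hyx⟩
    · rcases hzL with hza | ⟨μ', hμ', w, hzw⟩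
      · -- a ≤ ν a a, then a ≤ ν (ν a a) a
        have h2 : a ≤ ν a a :=
          le_trans hle (le_trans (hco ν hν y a z hya).1 (hco ν hν z a a hza).2)
        refine ⟨a, ν, hν, ν, hν, ?_⟩
        exact le_trans h2 (hco ν hν a (ν a a) a h2).1
      · refine ⟨w, ν, hν, μ', hμ', ?_⟩
        calc a ≤ ν y z := hle
          _ ≤ ν a z := (hco ν hν y a z hya).1
          _ ≤ ν a (μ' w a) := (hco ν hν z (μ' w a) a hzw).2
          _ = μ' (ν a w) a := (hassoc ν hν μ' hμ' a w a).symm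
    · rcases hzL with hza | ⟨μ', hμ', w, hzw⟩
      · refine ⟨x, γ', hγ', ν, hν, ?_⟩
        calc a ≤ ν y z := hle
          _ ≤ ν (γ' a x) z := (hco ν hν y (γ' a x) z hyx).1
          _ ≤ ν (γ' a x) a := (hco ν hν z a (γ' a x) hza).2
      · refine ⟨ν x w, γ', hγ', μ', hμ', ?_⟩
        calc a ≤ ν y z := hle
          _ ≤ ν (γ' a x) z := (hco ν hν y (γ' a x) z hyx).1
          _ ≤ ν (γ' a x) (μ' w a) := (hco ν hν z (μ' w a) (γ' a x) hzw).2
          _ = μ' (ν (γ' a x) w) a := (hassoc ν hν μ' hμ' (γ' a x) w a).symm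
          _ = μ' (γ' a (ν x w)) a := by rw [hassoc γ' hγ' ν hν a x w]
end
end

section
/- A po-Γ-semigroup M is intra-regular if and only if for every fuzzy right ideal f and every fuzzy left ideal g of M, f∧g ⪯ g∘f. -/
open Classical
noncomputable section

variable {M : Type*}

theorem stmt7 [PartialOrder M] (Γ : Set (M → M → M)) (hco : Compatible Γ)
    (hassoc : GAssoc Γ) :
    GIntraRegular Γ ↔
      ∀ f g : M → ℝ, FuzzyRightIdeal Γ f → FuzzyLeftIdeal Γ g →
        ∀ a : M, min (f a) (g a) ≤ fComp Γ g f a := by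
  constructor
  · intro hir f g hf hg a
    obtain ⟨x, y, γ, hγ, μ, hμ, ρ, hρ, ha⟩ := hir a
    have key : a ≤ μ (γ x a) (ρ a y) := by
      rw [hassoc γ hγ μ hμ x a (ρ a y)]; exact ha
    have hbdd : BddAbove {r : ℝ | ∃ u v, (∃ δ ∈ Γ, a ≤ δ u v) ∧ r = min (g u) (f v)} := by
      refine ⟨1, ?_⟩
      rintro r ⟨u, v, _, rfl⟩
      exact le_trans (min_le_left _ _) (hg.1 u).2
    have hmem : min (g (γ x a)) (f (ρ a y)) ∈
        {r : ℝ | ∃ u v, (∃ δ ∈ Γ, a ≤ δ u v) ∧ r = min (g u) (f v)} :=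
      ⟨γ x a, ρ a y, ⟨μ, hμ, key⟩, rfl⟩
    refine le_trans ?_ (le_csSup hbdd hmem)
    exact le_min (le_trans (min_le_right _ _) (hg.2.1 x a γ hγ))
      (le_trans (min_le_left _ _) (hf.2.1 a y ρ hρ))
  · intro h a
    set R : Set M := {v | v ≤ a ∨ ∃ t, ∃ ρ ∈ Γ, v ≤ ρ a t} with hRdef
    set L : Set M := {u | u ≤ a ∨ ∃ s, ∃ ρ ∈ Γ, u ≤ ρ s a} with hLdef
    set f : M → ℝ := fun v => if v ∈ R then 1 else 0 with hfdef
    set g : M → ℝ := fun u => if u ∈ L then 1 else 0 with hgdef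
    have hfbd : IsFuzzy f := by
      intro x; by_cases hx : x ∈ R <;> simp [hfdef, hx]
    have hgbd : IsFuzzy g := by
      intro x; by_cases hx : x ∈ L <;> simp [hgdef, hx]
    have hRclosed : ∀ x y : M, ∀ γ ∈ Γ, x ∈ R → γ x y ∈ R := by
      intro x y γ hγ hx
      rcases hx with hx | ⟨t, ρ, hρ, hx⟩
      · exact Or.inr ⟨y, γ, hγ, (hco γ hγ x a y hx).1⟩
      · refine Or.inr ⟨γ t y, ρ, hρ, ?_⟩
        calc γ x y ≤ γ (ρ a t) y := (hco γ hγ x (ρ a t) y hx).1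
          _ = ρ a (γ t y) := hassoc ρ hρ γ hγ a t y
    have hLclosed : ∀ x y : M, ∀ γ ∈ Γ, y ∈ L → γ x y ∈ L := by
      intro x y γ hγ hy
      rcases hy with hy | ⟨s, ρ, hρ, hy⟩
      · exact Or.inr ⟨x, γ, hγ, (hco γ hγ y a x hy).2⟩
      · refine Or.inr ⟨γ x s, ρ, hρ, ?_⟩
        calc γ x y ≤ γ x (ρ s a) := (hco γ hγ y (ρ s a) x hy).2
          _ = ρ (γ x s) a := (hassoc γ hγ ρ hρ x s a).symm
    have hRdown : ∀ x y : M, x ≤ y → y ∈ R → x ∈ R := by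
      intro x y hxy hy
      rcases hy with hy | ⟨t, ρ, hρ, hy⟩
      · exact Or.inl (le_trans hxy hy)
      · exact Or.inr ⟨t, ρ, hρ, le_trans hxy hy⟩
    have hLdown : ∀ x y : M, x ≤ y → y ∈ L → x ∈ L := by
      intro x y hxy hy
      rcases hy with hy | ⟨s, ρ, hρ, hy⟩
      · exact Or.inl (le_trans hxy hy)
      · exact Or.inr ⟨s, ρ, hρ, le_trans hxy hy⟩
    have hf : FuzzyRightIdeal Γ f := by
      refine ⟨hfbd, ?_, ?_⟩
      · intro x y γ hγ
        by_cases hx : x ∈ R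
        · simp [hfdef, hx, hRclosed x y γ hγ hx]
        · simp only [hfdef, if_neg hx]
          exact (hfbd _).1
      · intro x y hxy
        by_cases hy : y ∈ R
        · simp [hfdef, hy, hRdown x y hxy hy]
        · simp only [hfdef, if_neg hy]
          exact (hfbd _).1
    have hg : FuzzyLeftIdeal Γ g := by
      refine ⟨hgbd, ?_, ?_⟩
      · intro x y γ hγ
        by_cases hy : y ∈ L
        · simp [hgdef, hy, hLclosed x y γ hγ hy]
        · simp only [hgdef, if_neg hy]
          exact (hgbd _).1
      · intro x y hxy
        by_cases hy : y ∈ L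
        · simp [hgdef, hy, hLdown x y hxy hy]
        · simp only [hgdef, if_neg hy]
          exact (hgbd _).1
    have hfa : f a = 1 := by simp [hfdef, hRdef, show a ∈ R from Or.inl le_rfl]
    have hga : g a = 1 := by simp [hgdef, hLdef, show a ∈ L from Or.inl le_rfl]
    have key : (1 : ℝ) ≤ fComp Γ g f a := by
      have := h f g hf hg a
      rwa [hfa, hga, min_self] at this
    -- extract a witness from the sup
    have hwit : ∃ r ∈ {r : ℝ | ∃ u v, (∃ δ ∈ Γ, a ≤ δ u v) ∧ r = min (g u) (f v)},
        (1 : ℝ) / 2 < r := by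
      by_contra hns
      push_neg at hns
      have : fComp Γ g f a ≤ 1 / 2 := Real.sSup_le hns (by norm_num)
      linarith
    obtain ⟨r, ⟨u, v, ⟨δ, hδ, hav⟩, rfl⟩, hr⟩ := hwit
    have hu : u ∈ L := by
      by_contra hu
      have h0 : g u = 0 := by simp [hgdef, hu]
      have : (1:ℝ)/2 < g u := lt_of_lt_of_le hr (min_le_left _ _)
      rw [h0] at this; linarith
    have hv : v ∈ R := by
      by_contra hv
      have h0 : f v = 0 := by simp [hfdef, hv]
      have : (1:ℝ)/2 < f v := lt_of_lt_of_le hr (min_le_right _ _)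
      rw [h0] at this; linarith
    -- now case analysis
    rcases hu with hu | ⟨s, ρ₁, hρ₁, hu⟩ <;> rcases hv with hv | ⟨t, ρ₂, hρ₂, hv⟩
    · -- u ≤ a, v ≤ a : a ≤ δ a a
      have h1 : a ≤ δ a a :=
        le_trans hav (le_trans (hco δ hδ u a v hu).1 (hco δ hδ v a a hv).2)
      refine ⟨a, a, δ, hδ, δ, hδ, δ, hδ, ?_⟩
      have h2 : a ≤ δ (δ a a) (δ a a) :=
        le_trans h1 (le_trans (hco δ hδ a (δ a a) a h1).1 (hco δ hδ a (δ a a) (δ a a) h1).2)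
      calc a ≤ δ (δ a a) (δ a a) := h2
        _ = δ a (δ a (δ a a)) := hassoc δ hδ δ hδ a a (δ a a)
    · -- u ≤ a, v ≤ ρ₂ a t : a ≤ δ a (ρ₂ a t)
      have h1 : a ≤ δ a (ρ₂ a t) :=
        le_trans hav (le_trans (hco δ hδ u a v hu).1 (hco δ hδ v (ρ₂ a t) a hv).2)
      refine ⟨a, ρ₂ t t, δ, hδ, δ, hδ, ρ₂, hρ₂, ?_⟩
      have h2 : a ≤ δ a (ρ₂ (δ a (ρ₂ a t)) t) :=
        le_trans h1 ((hco δ hδ (ρ₂ a t) (ρ₂ (δ a (ρ₂ a t)) t) a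
          ((hco ρ₂ hρ₂ a (δ a (ρ₂ a t)) t h1).1)).2)
      calc a ≤ δ a (ρ₂ (δ a (ρ₂ a t)) t) := h2
        _ = δ a (δ a (ρ₂ (ρ₂ a t) t)) := by rw [hassoc δ hδ ρ₂ hρ₂ a (ρ₂ a t) t]
        _ = δ a (δ a (ρ₂ a (ρ₂ t t))) := by rw [hassoc ρ₂ hρ₂ ρ₂ hρ₂ a t t]
    · -- u ≤ ρ₁ s a, v ≤ a : a ≤ ρ₁ s (δ a a)
      have h1 : a ≤ ρ₁ s (δ a a) := by
        have : a ≤ δ (ρ₁ s a) a :=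
          le_trans hav (le_trans (hco δ hδ u (ρ₁ s a) v hu).1 (hco δ hδ v a (ρ₁ s a) hv).2)
        rwa [hassoc ρ₁ hρ₁ δ hδ s a a] at this
      refine ⟨ρ₁ s s, a, ρ₁, hρ₁, δ, hδ, δ, hδ, ?_⟩
      have h2 : a ≤ ρ₁ s (δ (ρ₁ s (δ a a)) a) :=
        le_trans h1 ((hco ρ₁ hρ₁ (δ a a) (δ (ρ₁ s (δ a a)) a) s
          ((hco δ hδ a (ρ₁ s (δ a a)) a h1).1)).2)
      calc a ≤ ρ₁ s (δ (ρ₁ s (δ a a)) a) := h2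
        _ = ρ₁ s (ρ₁ s (δ (δ a a) a)) := by rw [hassoc ρ₁ hρ₁ δ hδ s (δ a a) a]
        _ = ρ₁ s (ρ₁ s (δ a (δ a a))) := by rw [hassoc δ hδ δ hδ a a a]
        _ = ρ₁ (ρ₁ s s) (δ a (δ a a)) := (hassoc ρ₁ hρ₁ ρ₁ hρ₁ s s (δ a (δ a a))).symm
    · -- u ≤ ρ₁ s a, v ≤ ρ₂ a t : direct
      refine ⟨s, t, ρ₁, hρ₁, δ, hδ, ρ₂, hρ₂, ?_⟩
      have h1 : a ≤ δ (ρ₁ s a) (ρ₂ a t) :=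
        le_trans hav (le_trans (hco δ hδ u (ρ₁ s a) v hu).1
          (hco δ hδ v (ρ₂ a t) (ρ₁ s a) hv).2)
      rwa [hassoc ρ₁ hρ₁ δ hδ s a (ρ₂ a t)] at h1
end
end

section
/- A po-Γ-semigroup M is regular if and only if f ⪯ f∘1∘f for every fuzzy subset f of M. -/
open Classical
noncomputable section

variable {M : Type*}

theorem stmt12 [PartialOrder M] (Γ : Set (M → M → M)) (hco : Compatible Γ)
    (hassoc : GAssoc Γ) :
    GRegular Γ ↔
      ∀ f : M → ℝ, IsFuzzy f → ∀ a : M, f a ≤ fComp Γ (fComp Γ f fOne) f a := by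

  constructor
  · intro hreg f hf a
    obtain ⟨x, γ, hγ, μ, hμ, hle⟩ := hreg a
    have hg : f a ≤ fComp Γ f fOne (γ a x) := by
      have hmem : f a ∈ {r : ℝ | ∃ y z, (∃ γ' ∈ Γ, γ a x ≤ γ' y z) ∧ r = min (f y) (fOne z)} := by
        exact ⟨a, x, ⟨γ, hγ, le_refl _⟩, by simp [fOne, (hf a).2]⟩
      apply le_csSup _ hmem
      refine ⟨1, fun r hr => ?_⟩
      obtain ⟨y, z, _, rfl⟩ := hr
      exact le_trans (min_le_left _ _) (hf y).2
    have hmem : min (fComp Γ f fOne (γ a x)) (f a) ∈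
        {r : ℝ | ∃ y z, (∃ γ' ∈ Γ, a ≤ γ' y z) ∧ r = min (fComp Γ f fOne y) (f z)} :=
      ⟨γ a x, a, ⟨μ, hμ, hle⟩, rfl⟩
    calc f a ≤ min (fComp Γ f fOne (γ a x)) (f a) := le_min hg (le_refl _)
      _ ≤ fComp Γ (fComp Γ f fOne) f a := by
          apply le_csSup _ hmem
          refine ⟨1, fun r hr => ?_⟩
          obtain ⟨y, z, _, rfl⟩ := hr
          exact le_trans (min_le_right _ _) (hf z).2
  · intro h a
    set f : M → ℝ := fun x => if x = a then 1 else 0 with hfdef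
    have hf : IsFuzzy f := by
      intro x; by_cases hx : x = a <;> simp [hfdef, hx]
    have h1 : (1 : ℝ) ≤ fComp Γ (fComp Γ f fOne) f a := by
      have := h f hf a; simpa [hfdef] using this
    have hlt : (1 / 2 : ℝ) < fComp Γ (fComp Γ f fOne) f a := lt_of_lt_of_le (by norm_num) h1
    obtain ⟨r, hr, hrgt⟩ := exists_lt_of_lt_csSup (by
      rcases Set.eq_empty_or_nonempty {r : ℝ | ∃ y z, (∃ γ' ∈ Γ, a ≤ γ' y z) ∧ r = min (fComp Γ f fOne y) (f z)} with he | hne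
      · exfalso; rw [fComp, he] at hlt; simp [Real.sSup_empty] at hlt; linarith
      · exact hne) hlt
    obtain ⟨y, z, ⟨γ, hγ, hay⟩, rfl⟩ := hr
    have hz : f z > 1/2 := lt_of_lt_of_le hrgt (min_le_right _ _)
    have hza : z = a := by
      by_contra hne; simp [hfdef, hne] at hz; linarith
    have hy : (1/2 : ℝ) < fComp Γ f fOne y := lt_of_lt_of_le hrgt (min_le_left _ _)
    obtain ⟨s, hs, hsgt⟩ := exists_lt_of_lt_csSup (by
      rcases Set.eq_empty_or_nonempty {r : ℝ | ∃ u v, (∃ γ' ∈ Γ, y ≤ γ' u v) ∧ r = min (f u) (fOne v)} with he | hne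
      · exfalso; rw [fComp, he] at hy; simp [Real.sSup_empty] at hy; linarith
      · exact hne) hy
    obtain ⟨u, v, ⟨μ, hμ, hyuv⟩, rfl⟩ := hs
    have hu : f u > 1/2 := lt_of_lt_of_le hsgt (min_le_left _ _)
    have hua : u = a := by
      by_contra hne; simp [hfdef, hne] at hu; linarith
    rw [hua] at hyuv
    rw [hza] at hay
    refine ⟨v, μ, hμ, γ, hγ, ?_⟩
    exact le_trans hay ((hco γ hγ y (μ a v) a hyuv).1)
end
end

section
/- A po-Γ-semigroup M is intra-regular if and only if f ⪯ 1∘f²∘1 for every fuzzy subset f of M. -/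
open Classical
noncomputable section

variable {M : Type*}

/-- If `g ≤ 1`, then each min is a lower bound for the sup in `fComp`. -/
lemma le_fComp_aux [LE M] (Γ : Set (M → M → M)) (f g : M → ℝ)
    (hg : ∀ z, g z ≤ 1) {a y z : M} (h : ∃ γ ∈ Γ, a ≤ γ y z) :
    min (f y) (g z) ≤ fComp Γ f g a := by
  apply le_csSup
  · exact ⟨1, by rintro r ⟨y', z', _, rfl⟩; exact le_trans (min_le_right _ _) (hg z')⟩
  · exact ⟨y, z, h, rfl⟩

lemma fuzzy_fComp [LE M] (Γ : Set (M → M → M)) {f g : M → ℝ}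
    (hf : IsFuzzy f) (hg : IsFuzzy g) : IsFuzzy (fComp Γ f g) := by
  intro a
  constructor
  · apply Real.sSup_nonneg
    rintro r ⟨y, z, _, rfl⟩
    exact le_min (hf y).1 (hg z).1
  · apply Real.sSup_le
    · rintro r ⟨y, z, _, rfl⟩
      exact le_trans (min_le_right _ _) (hg z).2
    · exact zero_le_one

lemma fuzzy_fOne : IsFuzzy (fOne : M → ℝ) := fun _ => ⟨zero_le_one, le_refl 1⟩

theorem stmt13 [PartialOrder M] (Γ : Set (M → M → M)) (hco : Compatible Γ)
    (hassoc : GAssoc Γ) :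
    GIntraRegular Γ ↔
      ∀ f : M → ℝ, IsFuzzy f →
        ∀ a : M, f a ≤ fComp Γ (fComp Γ fOne (fComp Γ f f)) fOne a := by
  constructor
  · intro hir f hf a
    obtain ⟨x, y, γ, hγ, μ, hμ, ρ, hρ, ha⟩ := hir a
    -- rewrite:  a ≤ ρ (γ x (μ a a)) y
    have e1 : μ a (ρ a y) = ρ (μ a a) y := (hassoc μ hμ ρ hρ a a y).symm
    have e2 : γ x (ρ (μ a a) y) = ρ (γ x (μ a a)) y := (hassoc γ hγ ρ hρ x (μ a a) y).symm
    have ha' : a ≤ ρ (γ x (μ a a)) y := by rw [← e2, ← e1]; exact ha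
    have hff : IsFuzzy (fComp Γ f f) := fuzzy_fComp Γ hf hf
    have h1ff : IsFuzzy (fComp Γ fOne (fComp Γ f f)) := fuzzy_fComp Γ fuzzy_fOne hff
    -- step 1 : f a ≤ (f∘f)(μ a a)
    have s1 : f a ≤ fComp Γ f f (μ a a) := by
      have := le_fComp_aux Γ f f (fun z => (hf z).2)
        (a := μ a a) (y := a) (z := a) ⟨μ, hμ, le_refl _⟩
      simpa using this
    -- step 2 : f a ≤ (1∘f²)(γ x (μ a a))
    have s2 : f a ≤ fComp Γ fOne (fComp Γ f f) (γ x (μ a a)) := by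
      have := le_fComp_aux Γ fOne (fComp Γ f f) (fun z => (hff z).2)
        (a := γ x (μ a a)) (y := x) (z := μ a a) ⟨γ, hγ, le_refl _⟩
      refine le_trans ?_ this
      simp only [fOne]
      exact le_min (hf a).2 s1
    -- final step
    have := le_fComp_aux Γ (fComp Γ fOne (fComp Γ f f)) fOne (fun _ => le_refl 1)
      (a := a) (y := γ x (μ a a)) (z := y) ⟨ρ, hρ, ha'⟩
    refine le_trans ?_ this
    simp only [fOne]
    exact le_min s2 (hf a).2
  · intro h a
    set f : M → ℝ := fun x => if x = a then 1 else 0 with hfdef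
    have hf : IsFuzzy f := by
      intro x; by_cases hx : x = a <;> simp [hfdef, hx]
    have h1 : (1 : ℝ) ≤ fComp Γ (fComp Γ fOne (fComp Γ f f)) fOne a := by
      have := h f hf a
      simpa [hfdef] using this
    have key : ∀ (g h' : M → ℝ) (b : M), (1/2 : ℝ) < fComp Γ g h' b →
        ∃ y z, (∃ γ ∈ Γ, b ≤ γ y z) ∧ (1/2 : ℝ) < g y ∧ (1/2 : ℝ) < h' z := by
      intro g h' b hb
      have hne : {r : ℝ | ∃ y z, (∃ γ ∈ Γ, b ≤ γ y z) ∧ r = min (g y) (h' z)}.Nonempty := by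
        rcases Set.eq_empty_or_nonempty
          {r : ℝ | ∃ y z, (∃ γ ∈ Γ, b ≤ γ y z) ∧ r = min (g y) (h' z)} with he | hne
        · exfalso
          have : fComp Γ g h' b = 0 := by
            simp only [fComp, he, Real.sSup_empty]
          rw [this] at hb; norm_num at hb
        · exact hne
      obtain ⟨r, hr, hr2⟩ := exists_lt_of_lt_csSup hne hb
      obtain ⟨y, z, hyz, rfl⟩ := hr
      exact ⟨y, z, hyz, lt_of_lt_of_le hr2 (min_le_left _ _),
        lt_of_lt_of_le hr2 (min_le_right _ _)⟩
    have h1' : (1/2 : ℝ) < fComp Γ (fComp Γ fOne (fComp Γ f f)) fOne a :=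
      lt_of_lt_of_le (by norm_num) h1
    obtain ⟨y, z, ⟨γ', hγ', hyz⟩, hy, _⟩ := key _ _ _ h1'
    obtain ⟨u, v, ⟨γ₂, hγ₂, huv⟩, _, hv⟩ := key _ _ _ hy
    obtain ⟨p, q, ⟨γ₃, hγ₃, hpq⟩, hp, hq⟩ := key _ _ _ hv
    have hpa : p = a := by
      by_contra hne; simp [hfdef, hne] at hp; linarith
    have hqa : q = a := by
      by_contra hne; simp [hfdef, hne] at hq; linarith
    rw [hpa, hqa] at hpq
    -- a ≤ γ' y z ≤ γ' (γ₂ u v) z ≤ γ' (γ₂ u (γ₃ a a)) z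
    have st1 : γ' y z ≤ γ' (γ₂ u v) z := (hco γ' hγ' _ _ _ huv).1
    have st2 : γ₂ u v ≤ γ₂ u (γ₃ a a) := (hco γ₂ hγ₂ _ _ _ hpq).2
    have st3 : γ' (γ₂ u v) z ≤ γ' (γ₂ u (γ₃ a a)) z := (hco γ' hγ' _ _ _ st2).1
    have hfin : a ≤ γ' (γ₂ u (γ₃ a a)) z := le_trans hyz (le_trans st1 st3)
    have e1 : γ' (γ₂ u (γ₃ a a)) z = γ₂ u (γ' (γ₃ a a) z) := hassoc γ₂ hγ₂ γ' hγ' u (γ₃ a a) z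
    have e2 : γ' (γ₃ a a) z = γ₃ a (γ' a z) := hassoc γ₃ hγ₃ γ' hγ' a a z
    exact ⟨u, z, γ₂, hγ₂, γ₃, hγ₃, γ', hγ', by rw [← e2, ← e1]; exact hfin⟩
end
end

section
/- A po-Γ-semigroup M is right regular if and only if f ⪯ f²∘1 for every fuzzy subset f of M. -/
open Classical
noncomputable section

variable {M : Type*}

theorem stmt14 [PartialOrder M] (Γ : Set (M → M → M)) (hco : Compatible Γ)
    (hassoc : GAssoc Γ) :
    (∀ a : M, ∃ x : M, ∃ γ ∈ Γ, ∃ μ ∈ Γ, a ≤ μ (γ a a) x) ↔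
      ∀ f : M → ℝ, IsFuzzy f → ∀ a : M, f a ≤ fComp Γ (fComp Γ f f) fOne a := by
  constructor
  · intro h f hf a
    obtain ⟨x, γ, hγ, μ, hμ, ha⟩ := h a
    have h1 : f a ≤ fComp Γ f f (γ a a) := by
      apply le_csSup
      · exact ⟨1, by rintro r ⟨y, z, -, rfl⟩; exact le_trans (min_le_left _ _) (hf y).2⟩
      · exact ⟨a, a, ⟨γ, hγ, le_refl _⟩, (min_self _).symm⟩
    have h2 : f a ≤ min (fComp Γ f f (γ a a)) (fOne x) :=
      le_min h1 (hf a).2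
    refine le_trans h2 (le_csSup ?_ ?_)
    · exact ⟨1, by rintro r ⟨y, z, -, rfl⟩; exact min_le_right _ _⟩
    · exact ⟨γ a a, x, ⟨μ, hμ, ha⟩, rfl⟩
  · intro h a
    set f : M → ℝ := fun t => if t ≤ a then 1 else 0 with hfdef
    have hf : IsFuzzy f := by
      intro x; dsimp [f]; split <;> norm_num
    have key := h f hf a
    have hfa : f a = 1 := if_pos le_rfl
    have hex : ∃ r ∈ {r : ℝ | ∃ y z, (∃ γ ∈ Γ, a ≤ γ y z) ∧
        r = min (fComp Γ f f y) (fOne z)}, (1:ℝ)/2 < r := by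
      by_contra hc
      push_neg at hc
      have := Real.sSup_le hc (by norm_num)
      rw [hfa] at key
      have h4 : fComp Γ (fComp Γ f f) fOne a ≤ 1/2 := this
      linarith
    obtain ⟨r, ⟨y, z, ⟨γ, hγ, hyz⟩, rfl⟩, hr⟩ := hex
    have hry : (1:ℝ)/2 < fComp Γ f f y := lt_of_lt_of_le hr (min_le_left _ _)
    have hex2 : ∃ r ∈ {r : ℝ | ∃ u v, (∃ δ ∈ Γ, y ≤ δ u v) ∧
        r = min (f u) (f v)}, (1:ℝ)/2 < r := by
      by_contra hc
      push_neg at hc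
      have h3 := Real.sSup_le hc (by norm_num)
      have : fComp Γ f f y ≤ 1/2 := h3
      linarith
    obtain ⟨r, ⟨u, v, ⟨δ, hδ, huv⟩, rfl⟩, hr2⟩ := hex2
    have hu : u ≤ a := by
      by_contra hu
      have h0 : f u = 0 := if_neg hu
      have h1 := lt_of_lt_of_le hr2 (min_le_left (f u) (f v))
      rw [h0] at h1; norm_num at h1
    have hv : v ≤ a := by
      by_contra hv
      have h0 : f v = 0 := if_neg hv
      have h1 := lt_of_lt_of_le hr2 (min_le_right (f u) (f v))
      rw [h0] at h1; norm_num at h1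
    have hya : y ≤ δ a a :=
      le_trans huv (le_trans ((hco δ hδ u a v hu).1) ((hco δ hδ v a a hv).2))
    exact ⟨z, δ, hδ, γ, hγ, le_trans hyz ((hco γ hγ y (δ a a) z hya).1)⟩
end
end

section
/- A po-Γ-semigroup M is left regular if and only if f ⪯ 1∘f² for every fuzzy subset f of M. -/
open Classical
noncomputable section

variable {M : Type*}

theorem stmt15 [PartialOrder M] (Γ : Set (M → M → M)) (hco : Compatible Γ)
    (hassoc : GAssoc Γ) :
    (∀ a : M, ∃ x : M, ∃ γ ∈ Γ, ∃ μ ∈ Γ, a ≤ γ x (μ a a)) ↔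
      ∀ f : M → ℝ, IsFuzzy f → ∀ a : M, f a ≤ fComp Γ fOne (fComp Γ f f) a := by
  constructor
  · intro hreg f hf a
    obtain ⟨x, γ, hγ, μ, hμ, hle⟩ := hreg a
    have hinner : f a ≤ fComp Γ f f (μ a a) := by
      apply le_csSup
      · refine ⟨1, ?_⟩
        rintro r ⟨y, z, _, rfl⟩
        exact le_trans (min_le_left _ _) (hf y).2
      · exact ⟨a, a, ⟨μ, hμ, le_refl _⟩, by simp⟩
    calc f a ≤ min (fOne x) (fComp Γ f f (μ a a)) := by
          simp only [fOne]
          exact le_min (hf a).2 hinner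
      _ ≤ fComp Γ fOne (fComp Γ f f) a := by
          apply le_csSup
          · refine ⟨1, ?_⟩
            rintro r ⟨y, z, _, rfl⟩
            exact le_trans (min_le_left _ _) le_rfl
          · exact ⟨x, μ a a, ⟨γ, hγ, hle⟩, rfl⟩
  · intro h a
    classical
    set f : M → ℝ := fun b => if b = a then 1 else 0 with hfdef
    have hf : IsFuzzy f := by
      intro x; by_cases hx : x = a <;> simp [hfdef, hx]
    have h1 : (1:ℝ) ≤ fComp Γ fOne (fComp Γ f f) a := by
      have := h f hf a
      simpa [hfdef] using this
    have hne : {r : ℝ | ∃ y z, (∃ γ ∈ Γ, a ≤ γ y z) ∧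
        r = min (fOne y) (fComp Γ f f z)}.Nonempty := by
      by_contra hemp
      rw [Set.not_nonempty_iff_eq_empty] at hemp
      have h0 : fComp Γ fOne (fComp Γ f f) a = 0 := by
        rw [fComp, hemp]; exact Real.sSup_empty
      rw [h0] at h1; linarith
    obtain ⟨r, hr, hr2⟩ := exists_lt_of_lt_csSup hne
      (lt_of_lt_of_le (by norm_num : (1:ℝ)/2 < 1) h1)
    obtain ⟨y, z, ⟨γ, hγ, hayz⟩, rfl⟩ := hr
    have hz : (1:ℝ)/2 < fComp Γ f f z :=
      lt_of_lt_of_le hr2 (min_le_right _ _)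
    have hne2 : {r : ℝ | ∃ u v, (∃ μ ∈ Γ, z ≤ μ u v) ∧
        r = min (f u) (f v)}.Nonempty := by
      by_contra hemp
      rw [Set.not_nonempty_iff_eq_empty] at hemp
      have h0 : fComp Γ f f z = 0 := by
        rw [fComp, hemp]; exact Real.sSup_empty
      rw [h0] at hz; linarith
    obtain ⟨s, hs, hs2⟩ := exists_lt_of_lt_csSup hne2 hz
    obtain ⟨u, v, ⟨μ, hμ, hzuv⟩, rfl⟩ := hs
    have hfu := hs2.trans_le (min_le_left (f u) (f v))
    have hfv := hs2.trans_le (min_le_right (f u) (f v))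
    have hu : u = a := by
      by_contra hu
      rw [show f u = 0 from by simp [hfdef, hu]] at hfu
      linarith
    have hv : v = a := by
      by_contra hv
      rw [show f v = 0 from by simp [hfdef, hv]] at hfv
      linarith
    rw [hu, hv] at hzuv
    refine ⟨y, γ, hγ, μ, hμ, le_trans hayz ?_⟩
    exact (hco γ hγ z (μ a a) y hzuv).2
end
end

section
/- If M is a regular po-Γ-semigroup, then every fuzzy right ideal f of M is idempotent: f² = f. -/
open Classical
noncomputable section

variable {M : Type*}

theorem stmt17 [PartialOrder M] (Γ : Set (M → M → M)) (hco : Compatible Γ)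
    (hassoc : GAssoc Γ) (hreg : GRegular Γ)
    (f : M → ℝ) (hf : FuzzyRightIdeal Γ f) :
    fComp Γ f f = f := by
  obtain ⟨hfz, hri, hord⟩ := hf
  funext a
  apply le_antisymm
  · apply Real.sSup_le
    · rintro r ⟨y, z, ⟨γ, hγ, hle⟩, rfl⟩
      calc min (f y) (f z) ≤ f y := min_le_left _ _
        _ ≤ f (γ y z) := hri y z γ hγ
        _ ≤ f a := hord a _ hle
    · exact (hfz a).1
  · obtain ⟨x, γ, hγ, μ, hμ, hle⟩ := hreg a
    have hmem : f a ∈ {r : ℝ | ∃ y z, (∃ γ' ∈ Γ, a ≤ γ' y z) ∧ r = min (f y) (f z)} := by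
      refine ⟨γ a x, a, ⟨μ, hμ, hle⟩, ?_⟩
      rw [min_eq_right (hri a x γ hγ)]
    apply le_csSup _ hmem
    refine ⟨1, ?_⟩
    rintro r ⟨y, z, _, rfl⟩
    exact le_trans (min_le_left _ _) (hfz y).2
end
end

section
/- Let M be a po-Γ-semigroup. A fuzzy subset f of M is a fuzzy bi-ideal of M if and only if (1) f∘1∘f ⪯ f and (2) x ≤ y implies f(x) ≥ f(y). -/
open Classical
noncomputable section

variable {M : Type*}

theorem stmt18 [PartialOrder M] (Γ : Set (M → M → M)) (hco : Compatible Γ)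
    (hassoc : GAssoc Γ) (f : M → ℝ) (hf : IsFuzzy f) :
    ((∀ x y z : M, ∀ γ ∈ Γ, ∀ μ ∈ Γ, min (f x) (f z) ≤ f (γ x (μ y z))) ∧
      (∀ x y : M, x ≤ y → f y ≤ f x)) ↔
    ((∀ a : M, fComp Γ (fComp Γ f fOne) f a ≤ f a) ∧
      (∀ x y : M, x ≤ y → f y ≤ f x)) := by
  constructor
  · rintro ⟨hbi, hmono⟩
    refine ⟨?_, hmono⟩
    intro a
    apply Real.sSup_le
    · rintro r ⟨y, z, ⟨γ, hγ, hyz⟩, rfl⟩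
      -- need: min (fComp Γ f fOne y) (f z) ≤ f a
      by_contra hlt
      push_neg at hlt
      have h1 : f a < fComp Γ f fOne y := lt_of_lt_of_le hlt (min_le_left _ _)
      have h2 : f a < f z := lt_of_lt_of_le hlt (min_le_right _ _)
      -- sSup of inner set exceeds f a, so the set is nonempty and has an element > f a
      set T := {r : ℝ | ∃ u v, (∃ μ ∈ Γ, y ≤ μ u v) ∧ r = min (f u) (fOne v)} with hT
      have hTne : T.Nonempty := by
        by_contra hne
        rw [Set.not_nonempty_iff_eq_empty] at hne
        have : fComp Γ f fOne y = 0 := by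
          simp [fComp, ← hT, hne, Real.sSup_empty]
        rw [this] at h1
        exact absurd (hf a).1 (not_le.mpr h1)
      obtain ⟨t, htT, hat⟩ := exists_lt_of_lt_csSup hTne h1
      obtain ⟨u, v, ⟨μ, hμ, huv⟩, rfl⟩ := htT
      have htu : min (f u) (fOne v) ≤ f u := min_le_left _ _
      -- a ≤ γ y z ≤ γ (μ u v) z = μ u (γ v z)
      have hc : γ y z ≤ γ (μ u v) z := (hco γ hγ y (μ u v) z huv).1
      have heq : γ (μ u v) z = μ u (γ v z) := hassoc μ hμ γ hγ u v z
      have hle : a ≤ μ u (γ v z) := le_trans hyz (heq ▸ hc)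
      have := hbi u v z μ hμ γ hγ
      have hfa : min (f u) (f z) ≤ f a := le_trans this (hmono _ _ hle)
      have : f a < min (f u) (f z) := lt_min (lt_of_lt_of_le hat htu) h2
      exact absurd hfa (not_le.mpr this)
    · exact (hf a).1
  · rintro ⟨hcomp, hmono⟩
    refine ⟨?_, hmono⟩
    intro x y z γ hγ μ hμ
    have heq : μ (γ x y) z = γ x (μ y z) := hassoc γ hγ μ hμ x y z
    -- f x ≤ fComp Γ f fOne (γ x y)
    have hfx : f x ≤ fComp Γ f fOne (γ x y) := by
      have hmem : f x ∈ {r : ℝ | ∃ u v, (∃ γ' ∈ Γ, γ x y ≤ γ' u v) ∧ r = min (f u) (fOne v)} := by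
        exact ⟨x, y, ⟨γ, hγ, le_refl _⟩, by simp [fOne, min_eq_left (hf x).2]⟩
      apply le_csSup _ hmem
      refine ⟨1, ?_⟩
      rintro r ⟨u, v, _, rfl⟩
      exact le_trans (min_le_left _ _) (hf u).2
    have hmem2 : min (fComp Γ f fOne (γ x y)) (f z) ∈
        {r : ℝ | ∃ u v, (∃ γ' ∈ Γ, γ x (μ y z) ≤ γ' u v) ∧ r = min ((fComp Γ f fOne) u) (f v)} :=
      ⟨γ x y, z, ⟨μ, hμ, heq ▸ le_refl _⟩, rfl⟩
    have hbdd : BddAbove {r : ℝ | ∃ u v, (∃ γ' ∈ Γ, γ x (μ y z) ≤ γ' u v) ∧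
        r = min ((fComp Γ f fOne) u) (f v)} := by
      refine ⟨1, ?_⟩
      rintro r ⟨u, v, _, rfl⟩
      exact le_trans (min_le_right _ _) (hf v).2
    calc min (f x) (f z) ≤ min (fComp Γ f fOne (γ x y)) (f z) :=
          min_le_min hfx (le_refl _)
      _ ≤ fComp Γ (fComp Γ f fOne) f (γ x (μ y z)) := le_csSup hbdd hmem2
      _ ≤ f (γ x (μ y z)) := hcomp _
end
end

section
/- A po-Γ-semigroup M is regular if and only if R(a)∩L(a) ⊆ (R(a)Γ L(a)] for every a ∈ M, where R(a) and L(a) are the right and left ideals generated by a. -/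
open Classical
noncomputable section

variable {M : Type*}

/-- Lower closure (H]. -/
def lcl [LE M] (H : Set M) : Set M := {t | ∃ h ∈ H, t ≤ h}

/-- AΓB. -/
def sProd (Γ : Set (M → M → M)) (A B : Set M) : Set M :=
  {c | ∃ a ∈ A, ∃ b ∈ B, ∃ γ ∈ Γ, c = γ a b}

theorem stmt19 [PartialOrder M] (Γ : Set (M → M → M)) (hco : Compatible Γ)
    (hassoc : GAssoc Γ) :
    (∀ a : M, a ∈ lcl (sProd Γ (sProd Γ {a} Set.univ) {a})) ↔
      ∀ a : M,
        lcl ({a} ∪ sProd Γ {a} Set.univ) ∩ lcl ({a} ∪ sProd Γ Set.univ {a}) ⊆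
          lcl (sProd Γ (lcl ({a} ∪ sProd Γ {a} Set.univ))
                (lcl ({a} ∪ sProd Γ Set.univ {a}))) := by
  constructor
  · intro hreg a t ht
    obtain ⟨htR, htL⟩ := ht
    obtain ⟨hh, ⟨b, hb, c, hc, μ, hμ, hdef⟩, hle⟩ := hreg t
    obtain ⟨ts, hts, y, -, γ, hγ, hbdef⟩ := hb
    obtain rfl : t = ts := Eq.symm hts
    obtain rfl : t = c := Eq.symm hc
    subst hdef hbdef
    obtain ⟨u, hu, htu⟩ := htR
    have hR : γ t y ∈ lcl ({a} ∪ sProd Γ {a} Set.univ) := by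
      rcases hu with hu | ⟨a', ha', z, -, γ', hγ', hudef⟩
      · obtain rfl : a = u := Eq.symm hu
        exact ⟨γ a y, Or.inr ⟨a, rfl, y, trivial, γ, hγ, rfl⟩,
          (hco γ hγ t a y htu).1⟩
      · obtain rfl : a' = a := ha'
        refine ⟨γ u y, Or.inr ⟨a', rfl, γ z y, trivial, γ', hγ', ?_⟩,
          (hco γ hγ t u y htu).1⟩
        rw [hudef, hassoc γ' hγ' γ hγ]
    exact ⟨μ (γ t y) t, ⟨γ t y, hR, t, htL, μ, hμ, rfl⟩, hle⟩
  · intro h a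
    have ha : a ∈ lcl ({a} ∪ sProd Γ {a} Set.univ) ∩ lcl ({a} ∪ sProd Γ Set.univ {a}) :=
      ⟨⟨a, Or.inl rfl, le_refl a⟩, ⟨a, Or.inl rfl, le_refl a⟩⟩
    obtain ⟨c, ⟨r, hr, l, hl, γ, hγ, hcdef⟩, hac⟩ := h a ha
    subst hcdef
    obtain ⟨u, hu, hru⟩ := hr
    obtain ⟨v, hv, hlv⟩ := hl
    have hac2 : a ≤ γ u v :=
      le_trans hac (le_trans ((hco γ hγ r u l hru).1) ((hco γ hγ l v u hlv).2))
    rcases hu with hu | ⟨a1, ha1, z, -, γ', hγ', hudef⟩ <;>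
      rcases hv with hv | ⟨w, -, a2, ha2, ρ, hρ, hvdef⟩
    · -- u = a, v = a : a ≤ γ a a, iterate
      obtain rfl : a = u := Eq.symm hu; obtain rfl : a = v := Eq.symm hv
      exact ⟨γ (γ a a) a, ⟨γ a a, ⟨a, rfl, a, trivial, γ, hγ, rfl⟩, a, rfl, γ, hγ, rfl⟩,
        le_trans hac2 ((hco γ hγ a (γ a a) a hac2).1)⟩
    · -- u = a, v = ρ w a : a ≤ γ a (ρ w a) = ρ (γ a w) a
      obtain rfl : a = u := Eq.symm hu; obtain rfl : a = a2 := Eq.symm ha2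
      refine ⟨ρ (γ a w) a, ⟨γ a w, ⟨a, rfl, w, trivial, γ, hγ, rfl⟩, a, rfl, ρ, hρ, rfl⟩, ?_⟩
      rw [hassoc γ hγ ρ hρ, ← hvdef]; exact hac2
    · -- u = γ' a z, v = a
      obtain rfl : a = a1 := Eq.symm ha1; obtain rfl : a = v := Eq.symm hv
      exact ⟨γ u a, ⟨u, ⟨a, rfl, z, trivial, γ', hγ', hudef⟩, a, rfl, γ, hγ, rfl⟩, hac2⟩
    · -- u = γ' a z, v = ρ w a
      obtain rfl : a = a1 := Eq.symm ha1; obtain rfl : a = a2 := Eq.symm ha2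
      refine ⟨ρ (γ' a (γ z w)) a,
        ⟨γ' a (γ z w), ⟨a, rfl, γ z w, trivial, γ', hγ', rfl⟩, a, rfl, ρ, hρ, rfl⟩, ?_⟩
      rw [hassoc γ' hγ' ρ hρ, hassoc γ hγ ρ hρ, ← hassoc γ' hγ' γ hγ, ← hudef, ← hvdef]
      exact hac2
end
end
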